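/- arXiv:1204.2843 — 2 statements merged into one kernel-verified Lean document; each statement's English description precedes it below -/
import Mathlib

section
/- Let G be a subgroup of Aut(X*) containing a spherically transitive element, and define Y_n : G_∞ → ℕ by Y_n(g) = #{v ∈ X^n : π_n(g)(v) = v}. Then μ({g ∈ G_∞ : the sequence Y_1(g), Y_2(g), Y_3(g), … is eventually constant}) = 1. -/
/-- The automorphism group of the rooted `d`-ary tree `X*` (words over `Fin d`),
realized as the subgroup of permutations of `List (Fin d)` preserving word length
and the prefix relation. -/
def treeAutGroup (d : ℕ) : Subgroup (Equiv.Perm (List (Fin d))) where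
  carrier := {g | (∀ v, (g v).length = v.length) ∧ ∀ v w, v <+: w ↔ g v <+: g w}
  one_mem' := ⟨fun _ => rfl, fun _ _ => Iff.rfl⟩
  mul_mem' := by
    rintro a b ⟨ha1, ha2⟩ ⟨hb1, hb2⟩
    refine ⟨fun v => ?_, fun v w => ?_⟩
    · simpa [Equiv.Perm.mul_apply] using (ha1 (b v)).trans (hb1 v)
    · simpa [Equiv.Perm.mul_apply] using (hb2 v w).trans (ha2 (b v) (b w))
  inv_mem' := by
    rintro g ⟨h1, h2⟩
    refine ⟨fun v => ?_, fun v w => ?_⟩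
    · conv_rhs => rw [← (by simp : g (g⁻¹ v) = v)]
      exact (h1 _).symm
    · have := (h2 (g⁻¹ v) (g⁻¹ w)).symm
      simpa using this

/-- An automorphism of the rooted `d`-ary tree. -/
abbrev TreeAut (d : ℕ) : Type := ↥(treeAutGroup d)

namespace TreeAut

variable {d : ℕ}

theorem length_apply (g : TreeAut d) (v : List (Fin d)) :
    ((g : Equiv.Perm (List (Fin d))) v).length = v.length := g.2.1 v

theorem prefix_iff (g : TreeAut d) (v w : List (Fin d)) :
    v <+: w ↔ (g : Equiv.Perm (List (Fin d))) v <+: (g : Equiv.Perm (List (Fin d))) w :=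
  g.2.2 v w

theorem apply_append (g : TreeAut d) (v w : List (Fin d)) :
    (g : Equiv.Perm (List (Fin d))) (v ++ w) =
      (g : Equiv.Perm (List (Fin d))) v ++
        (((g : Equiv.Perm (List (Fin d))) (v ++ w)).drop v.length) := by
  obtain ⟨t, ht⟩ := (g.prefix_iff v (v ++ w)).mp ⟨w, rfl⟩
  rw [← ht, List.drop_left' (g.length_apply v)]

/-- The restriction of a tree automorphism at the vertex `v`, as a permutation of words:
the unique map with `g (v ++ w) = g v ++ (restrictPerm g v) w`. -/
def restrictPerm (g : TreeAut d) (v : List (Fin d)) : Equiv.Perm (List (Fin d)) where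
  toFun w := (((g : Equiv.Perm (List (Fin d)))) (v ++ w)).drop v.length
  invFun w := (((g : Equiv.Perm (List (Fin d))).symm)
      (((g : Equiv.Perm (List (Fin d))) v) ++ w)).drop v.length
  left_inv w := by
    dsimp only
    have h := (g.apply_append v w).symm
    rw [h, Equiv.symm_apply_apply, List.drop_left]
  right_inv w := by
    dsimp only
    have hpre : v <+: (g : Equiv.Perm (List (Fin d))).symm
        ((g : Equiv.Perm (List (Fin d))) v ++ w) := by
      have := (g.prefix_iff v ((g : Equiv.Perm (List (Fin d))).symm
        ((g : Equiv.Perm (List (Fin d))) v ++ w))).symm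
      rw [Equiv.apply_symm_apply] at this
      exact this.mp ⟨w, rfl⟩
    obtain ⟨u, hu⟩ := hpre
    rw [← hu, List.drop_left]
    have h2 : (g : Equiv.Perm (List (Fin d))) (v ++ u) =
        (g : Equiv.Perm (List (Fin d))) v ++ w := by rw [hu, Equiv.apply_symm_apply]
    rw [h2, List.drop_left' (g.length_apply v)]

theorem restrictPerm_mem (g : TreeAut d) (v : List (Fin d)) :
    restrictPerm g v ∈ treeAutGroup d := by
  constructor
  · intro w
    show (((g : Equiv.Perm (List (Fin d))) (v ++ w)).drop v.length).length = w.length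
    rw [List.length_drop, g.length_apply, List.length_append]
    omega
  · intro w w'
    show w <+: w' ↔
      ((g : Equiv.Perm (List (Fin d))) (v ++ w)).drop v.length <+:
        ((g : Equiv.Perm (List (Fin d))) (v ++ w')).drop v.length
    calc w <+: w' ↔ v ++ w <+: v ++ w' := (List.prefix_append_right_inj v).symm
      _ ↔ (g : Equiv.Perm (List (Fin d))) (v ++ w) <+:
            (g : Equiv.Perm (List (Fin d))) (v ++ w') := g.prefix_iff _ _
      _ ↔ _ := by
            conv_lhs => rw [g.apply_append v w, g.apply_append v w']
            exact List.prefix_append_right_inj _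

/-- The restriction `g|_v` of a tree automorphism `g` at a vertex `v`, as a tree
automorphism: the unique automorphism with `g (v ++ w) = g v ++ g|_v w` for all `w`. -/
def restrict (g : TreeAut d) (v : List (Fin d)) : TreeAut d :=
  ⟨restrictPerm g v, restrictPerm_mem g v⟩

/-- `g` fixes the end (infinite word) `w` of the tree: it fixes every finite initial
segment of `w`. -/
def FixesEnd (g : TreeAut d) (w : ℕ → Fin d) : Prop :=
  ∀ n : ℕ, (g : Equiv.Perm (List (Fin d))) ((List.range n).map w) = (List.range n).map w

end TreeAut

/-- `g` is spherically transitive: the cyclic group it generates acts transitively on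
the words of length `n`, for every `n ≥ 1`. -/
def SphericallyTransitive {d : ℕ} (g : TreeAut d) : Prop :=
  ∀ n : ℕ, 1 ≤ n → ∀ v w : List (Fin d), v.length = n → w.length = n →
    ∃ k : ℤ, ((g ^ k : TreeAut d) : Equiv.Perm (List (Fin d))) v = w

/-- The `n`-th level of the tree: words of length `n`. -/
abbrev Level (d n : ℕ) : Type := {v : List (Fin d) // v.length = n}

instance Level.finite (d n : ℕ) : Finite (Level d n) := by
  have key : ∀ v : Level d n,
      v.1 = List.ofFn (fun i : Fin n => v.1.get (Fin.cast v.2.symm i)) := by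
    intro v
    refine List.ext_get (by simp [v.2]) ?_
    intro i h1 h2
    simp [List.get_ofFn, Fin.cast]
  refine Finite.of_injective
    (fun v : Level d n => fun i : Fin n => v.1.get (Fin.cast v.2.symm i)) ?_
  intro v w h
  have h' : (fun i : Fin n => v.1.get (Fin.cast v.2.symm i)) =
      (fun i : Fin n => w.1.get (Fin.cast w.2.symm i)) := h
  refine Subtype.ext ?_
  rw [key v, key w, h']

/-- The action of a tree automorphism on the `n`-th level of the tree. -/
def levelHom (d n : ℕ) : TreeAut d →* Equiv.Perm (Level d n) where
  toFun g :=
    { toFun := fun v => ⟨(g : Equiv.Perm (List (Fin d))) v.1, by rw [g.2.1, v.2]⟩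
      invFun := fun v => ⟨((g⁻¹ : TreeAut d) : Equiv.Perm (List (Fin d))) v.1,
        by rw [(g⁻¹ : TreeAut d).2.1, v.2]⟩
      left_inv := fun v => Subtype.ext (by simp)
      right_inv := fun v => Subtype.ext (by simp) }
  map_one' := by ext v; rfl
  map_mul' g h := by ext v; rfl

/-- The fraction of elements of `G_n` (the image of `G` acting on level `n`)
having at least one fixed point on level `n`. -/
noncomputable def fixedRatio {d : ℕ} (G : Subgroup (TreeAut d)) (n : ℕ) : ℝ :=
  (Nat.card {p : Equiv.Perm (Level d n) // p ∈ G.map (levelHom d n) ∧ ∃ v, p v = v} : ℝ) /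
    (Nat.card (G.map (levelHom d n)) : ℝ)

/-- `G ≤ Aut(X*)` is contracting: there is a finite subset `N ⊆ G` such that every
`g ∈ G` has all its restrictions at sufficiently long words inside `N`. -/
def Contracting {d : ℕ} (G : Subgroup (TreeAut d)) : Prop :=
  ∃ N : Set (TreeAut d), N.Finite ∧ N ⊆ (G : Set (TreeAut d)) ∧
    ∀ g ∈ G, ∃ m : ℕ, 1 ≤ m ∧ ∀ v : List (Fin d), m ≤ v.length → TreeAut.restrict g v ∈ N

/-- The set `N₁` of elements of `G` fixing a non-empty word `v` with `g|_v = g`. -/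
def N1 {d : ℕ} (G : Subgroup (TreeAut d)) : Set (TreeAut d) :=
  {g | g ∈ G ∧ ∃ v : List (Fin d), v ≠ [] ∧ TreeAut.restrict g v = g ∧
    (g : Equiv.Perm (List (Fin d))) v = v}

section Profinite

/-- Permutation groups of (finite) levels carry the discrete topology. -/
instance (α : Type*) : TopologicalSpace (Equiv.Perm α) := ⊥

instance (α : Type*) : DiscreteTopology (Equiv.Perm α) := ⟨rfl⟩

instance (α : Type*) : IsTopologicalGroup (Equiv.Perm α) where
  continuous_mul := continuous_of_discreteTopology
  continuous_inv := continuous_of_discreteTopology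

instance (d n : ℕ) : Finite (Equiv.Perm (Level d n)) := by
  have : Finite (Level d n) := Level.finite d n
  exact Finite.of_injective (fun e : Equiv.Perm (Level d n) => (⇑e, ⇑e.symm))
    (fun e e' h => Equiv.ext fun v => congrFun (Prod.mk.injEq _ _ _ _ ▸ h).1 v)

/-- The simultaneous action of a tree automorphism on all levels of the tree. -/
def prodHom (d : ℕ) : TreeAut d →* Π n : ℕ, Equiv.Perm (Level d n) :=
  Pi.monoidHom fun n => levelHom d n

/-- `G∞`: the closure of (the image of) `G` in the profinite group `Π_n Sym(X^n)`;
equivalently, the inverse limit of the finite groups `G_n`. -/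
def Ginf {d : ℕ} (G : Subgroup (TreeAut d)) : Subgroup (Π n : ℕ, Equiv.Perm (Level d n)) :=
  (G.map (prodHom d)).topologicalClosure

instance {d : ℕ} (G : Subgroup (TreeAut d)) : CompactSpace (Ginf G) :=
  isCompact_iff_compactSpace.mp ((Subgroup.isClosed_topologicalClosure _).isCompact)

instance {d : ℕ} (G : Subgroup (TreeAut d)) : MeasurableSpace (Ginf G) := borel _

instance {d : ℕ} (G : Subgroup (TreeAut d)) : BorelSpace (Ginf G) := ⟨rfl⟩

/-- `Y_n(g)`: the number of fixed points of `π_n(g)` on the `n`-th level `X^n`. -/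
noncomputable def Ynat {d : ℕ} (G : Subgroup (TreeAut d)) (n : ℕ) (g : Ginf G) : ℕ :=
  Nat.card {v : Level d n // (g : Π m : ℕ, Equiv.Perm (Level d m)) n v = v}

/-- An element `g` of `G∞` fixes the end `w ∈ X^ω` if it fixes every finite initial
segment of `w`. -/
def GinfFixesEnd {d : ℕ} {G : Subgroup (TreeAut d)} (g : Ginf G) (w : ℕ → Fin d) : Prop :=
  ∀ n : ℕ, (g : Π m : ℕ, Equiv.Perm (Level d m)) n ⟨(List.range n).map w, by simp⟩ =
    ⟨(List.range n).map w, by simp⟩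

end Profinite

/-!
`Y_n` is a martingale for the filtration generated by `π_n`. Given `π_n(g)`, a vertex `v` fixed by
`π_n(g)` has each of its `d` children fixed with conditional probability `1/d`: a power of the
spherically transitive element sending one child of `v` to another fixes `v`, hence acts trivially
on level `n` (a transitive abelian permutation group acts regularly), and left multiplication by it
preserves Haar measure while permuting the events "`g` maps the child `vx` to `vy`". Being
nonnegative with constant mean, the martingale is bounded in `L¹`, so it converges almost surely,
and a convergent sequence of integers is eventually constant.
-/

open MeasureTheory

theorem exists_forall_ge_eq_of_cauchySeq_natCast {u : ℕ → ℕ}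
    (hu : CauchySeq fun n => (u n : ℝ)) : ∃ N, ∀ m, N ≤ m → u m = u N := by
  obtain ⟨N, hN⟩ := Metric.cauchySeq_iff'.mp hu 1 one_pos
  refine ⟨N, fun m hm => by_contra fun hne => ?_⟩
  exact (Nat.pairwise_one_le_dist hne).not_gt (Nat.dist_cast_real _ _ ▸ hN m hm)

theorem MeasureTheory.Martingale.ae_eventually_const_of_natCast {Ω : Type*}
    {m0 : MeasurableSpace Ω} {μ : Measure Ω} [IsFiniteMeasure μ] {ℱ : Filtration ℕ m0}
    {Y : ℕ → Ω → ℕ} (hY : Martingale (fun n ω => (Y n ω : ℝ)) ℱ μ) :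
    ∀ᵐ ω ∂μ, ∃ N, ∀ m, N ≤ m → Y m ω = Y N ω := by
  have hbdd :
      ∀ n, eLpNorm (fun ω => (Y n ω : ℝ)) 1 μ ≤ (∫ ω, (Y 0 ω : ℝ) ∂μ).toNNReal := by
    intro n
    rw [eLpNorm_one_eq_lintegral_enorm,
      ← ofReal_integral_norm_eq_lintegral_enorm (hY.integrable n)]
    simp only [Real.norm_natCast]
    rw [← setIntegral_univ, ← hY.setIntegral_eq (Nat.zero_le n) MeasurableSet.univ,
      setIntegral_univ]
    rfl
  filter_upwards [hY.submartingale.ae_tendsto_limitProcess hbdd] with ω hω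
  exact exists_forall_ge_eq_of_cauchySeq_natCast hω.cauchySeq

section

variable {d : ℕ}

theorem TreeAut.apply_take (g : TreeAut d) (w : List (Fin d)) (j : ℕ) :
    (g : Equiv.Perm (List (Fin d))) (w.take j) = ((g : Equiv.Perm (List (Fin d))) w).take j := by
  have h := List.prefix_iff_eq_take.mp ((g.prefix_iff _ _).mp (List.take_prefix j w))
  rw [h, g.length_apply, List.length_take, ← g.length_apply w, ← List.take_eq_take_min]

theorem SphericallyTransitive.zpow_apply_eq_self {a : TreeAut d} (ha : SphericallyTransitive a)
    {k : ℤ} {v w : List (Fin d)} (hv : ((a ^ k : TreeAut d) : Equiv.Perm (List (Fin d))) v = v)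
    (hw : w.length = v.length) : ((a ^ k : TreeAut d) : Equiv.Perm (List (Fin d))) w = w := by
  rcases Nat.eq_zero_or_pos v.length with h0 | hpos
  · rw [List.length_eq_zero_iff.mp (hw.trans h0)]
    exact List.length_eq_zero_iff.mp ((a ^ k).length_apply [])
  · obtain ⟨j, rfl⟩ := ha _ hpos v w rfl hw
    have hcomm : a ^ k * a ^ j = a ^ j * a ^ k := (Commute.self_zpow a j).zpow_left k |>.eq
    rw [← Equiv.Perm.mul_apply, ← Subgroup.coe_mul, hcomm, Subgroup.coe_mul,
      Equiv.Perm.mul_apply, hv]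

namespace Level

variable {n : ℕ}

def parent (w : Level d (n + 1)) : Level d n := ⟨w.1.take n, by simp [w.2]⟩

def snoc (v : Level d n) (x : Fin d) : Level d (n + 1) := ⟨v.1 ++ [x], by simp [v.2]⟩

@[simp]
theorem parent_snoc (v : Level d n) (x : Fin d) : (v.snoc x).parent = v :=
  Subtype.ext (List.take_left' v.2)

theorem exists_snoc_eq (w : Level d (n + 1)) : ∃ x, w.parent.snoc x = w := by
  obtain ⟨x, hx⟩ := List.length_eq_one_iff.mp (show (w.1.drop n).length = 1 by simp [w.2])
  refine ⟨x, Subtype.ext ?_⟩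
  change w.1.take n ++ [x] = w.1
  rw [← hx, List.take_append_drop]

theorem snoc_bijective : Function.Bijective fun p : Level d n × Fin d => p.1.snoc p.2 := by
  refine ⟨fun p q h => ?_, fun w => ?_⟩
  · obtain ⟨h1, h2⟩ := List.append_inj (congrArg Subtype.val h) (p.1.2.trans q.1.2.symm)
    exact Prod.ext (Subtype.ext h1) (List.singleton_inj.mp h2)
  · obtain ⟨x, hx⟩ := w.exists_snoc_eq
    exact ⟨(w.parent, x), hx⟩

theorem snoc_right_injective (v : Level d n) : Function.Injective v.snoc := fun x y h =>
  congrArg Prod.snd (snoc_bijective.1 (a₁ := (v, x)) (a₂ := (v, y)) h)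

noncomputable instance : Fintype (Level d n) := Fintype.ofFinite _

theorem sum_eq_sum_sum_snoc {M : Type*} [AddCommMonoid M] (f : Level d (n + 1) → M) :
    ∑ w, f w = ∑ v : Level d n, ∑ x, f (v.snoc x) := by
  rw [← Fintype.sum_prod_type', snoc_bijective.sum_comp]

end Level

theorem levelHom_apply_parent {n : ℕ} (a : TreeAut d) (w : Level d (n + 1)) :
    (levelHom d (n + 1) a w).parent = levelHom d n a w.parent :=
  Subtype.ext (a.apply_take w.1 n).symm

theorem SphericallyTransitive.exists_levelHom_eq_one {a : TreeAut d} (ha : SphericallyTransitive a)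
    {n : ℕ} {w u : Level d (n + 1)} (h : w.parent = u.parent) :
    ∃ k : ℤ, levelHom d n (a ^ k) = 1 ∧ levelHom d (n + 1) (a ^ k) w = u := by
  obtain ⟨k, hk⟩ := ha (n + 1) n.succ_pos w.1 u.1 w.2 u.2
  have hwu : levelHom d (n + 1) (a ^ k) w = u := Subtype.ext hk
  have hfix : levelHom d n (a ^ k) w.parent = w.parent := by
    rw [← levelHom_apply_parent, hwu, h]
  refine ⟨k, Equiv.ext fun v => Subtype.ext ?_, hwu⟩
  exact ha.zpow_apply_eq_self (congrArg Subtype.val hfix) (v.2.trans w.parent.2.symm)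

namespace Ginf

variable {G : Subgroup (TreeAut d)}

variable (G) in
def proj (n : ℕ) : Ginf G →* Equiv.Perm (Level d n) :=
  (Pi.evalMonoidHom (fun m => Equiv.Perm (Level d m)) n).comp (Ginf G).subtype

def ofMem {a : TreeAut d} (ha : a ∈ G) : Ginf G :=
  ⟨prodHom d a, Subgroup.le_topologicalClosure _ (Subgroup.mem_map_of_mem _ ha)⟩

theorem continuous_proj (n : ℕ) : Continuous (proj G n) :=
  (continuous_apply n).comp continuous_subtype_val

theorem proj_succ_apply_parent {n : ℕ} (g : Ginf G) (w : Level d (n + 1)) :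
    (proj G (n + 1) g w).parent = proj G n g w.parent := by
  let C : Set (Π m, Equiv.Perm (Level d m)) := {p | (p (n + 1) w).parent = p n w.parent}
  have hC : IsClosed C :=
    (isClosed_discrete {q : Equiv.Perm (Level d n) × Equiv.Perm (Level d (n + 1)) |
      (q.2 w).parent = q.1 w.parent}).preimage
      (f := fun p : Π m, Equiv.Perm (Level d m) => (p n, p (n + 1))) (by fun_prop)
  have hGC : ((G.map (prodHom d) : Subgroup _) : Set (Π m, Equiv.Perm (Level d m))) ⊆ C := by
    rintro _ ⟨a, -, rfl⟩
    exact levelHom_apply_parent a w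
  exact closure_minimal hGC hC g.2

theorem proj_eq_of_proj_succ_eq (hd : 0 < d) {n : ℕ} {g h : Ginf G}
    (hgh : proj G (n + 1) g = proj G (n + 1) h) : proj G n g = proj G n h := by
  ext v : 1
  have h := congrArg Level.parent (DFunLike.congr_fun hgh (v.snoc ⟨0, hd⟩))
  rwa [proj_succ_apply_parent, proj_succ_apply_parent, Level.parent_snoc] at h

theorem exists_proj_eq_one_and_apply_eq (hst : ∃ a ∈ G, SphericallyTransitive a) {n : ℕ}
    {w u : Level d (n + 1)} (h : w.parent = u.parent) :
    ∃ b : Ginf G, proj G n b = 1 ∧ proj G (n + 1) b w = u := by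
  obtain ⟨a, haG, ha⟩ := hst
  obtain ⟨k, hk1, hk⟩ := ha.exists_levelHom_eq_one h
  exact ⟨ofMem (zpow_mem haG k), hk1, hk⟩

theorem measurableSet_proj_preimage (n : ℕ) (S : Set (Equiv.Perm (Level d n))) :
    MeasurableSet (proj G n ⁻¹' S) :=
  ((isOpen_discrete S).preimage (continuous_proj n)).measurableSet

theorem measurableSet_fix (n : ℕ) (v : Level d n) :
    MeasurableSet {g : Ginf G | proj G n g v = v} :=
  measurableSet_proj_preimage n {σ | σ v = v}

variable (G) in
def levelFiltration (hd : 0 < d) : Filtration ℕ (inferInstance : MeasurableSpace (Ginf G)) where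
  seq n := MeasurableSpace.comap (proj G n) ⊤
  mono' := monotone_nat_of_le_succ fun n => by
    rintro _ ⟨S, -, rfl⟩
    refine ⟨{τ | ∃ g, proj G (n + 1) g = τ ∧ proj G n g ∈ S}, trivial,
      Set.ext fun g => ⟨?_, fun h => ⟨g, rfl, h⟩⟩⟩
    rintro ⟨g', hg', hS⟩
    rwa [proj_eq_of_proj_succ_eq hd hg'] at hS
  le' n := by
    rintro _ ⟨S, -, rfl⟩
    exact measurableSet_proj_preimage n S

theorem natCast_Ynat_eq_sum_indicator (n : ℕ) (g : Ginf G) :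
    (Ynat G n g : ℝ) = ∑ v, {g : Ginf G | proj G n g v = v}.indicator 1 g := by
  classical
  rw [Ynat, Nat.card_eq_fintype_card, Fintype.card_subtype, Finset.card_filter, Nat.cast_sum]
  refine Finset.sum_congr rfl fun v _ => ?_
  simp only [Set.indicator_apply, Set.mem_ofPred_eq, Pi.one_apply, Nat.cast_ite, Nat.cast_one,
    Nat.cast_zero]
  rfl

theorem integrable_Ynat (μ : Measure (Ginf G)) [IsFiniteMeasure μ] (n : ℕ) :
    Integrable (fun g => (Ynat G n g : ℝ)) μ := by
  simp_rw [natCast_Ynat_eq_sum_indicator]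
  exact integrable_finsetSum _ fun v _ =>
    (integrable_const 1).indicator (measurableSet_fix n v)

theorem setIntegral_Ynat (μ : Measure (Ginf G)) [IsFiniteMeasure μ] (s : Set (Ginf G)) (n : ℕ) :
    ∫ g in s, (Ynat G n g : ℝ) ∂μ = ∑ v, μ.real ({g | proj G n g v = v} ∩ s) := by
  simp_rw [natCast_Ynat_eq_sum_indicator]
  rw [integral_finsetSum _ fun v _ =>
    (integrable_const 1).indicator (measurableSet_fix n v)]
  refine Finset.sum_congr rfl fun v _ => ?_
  rw [integral_indicator_one (measurableSet_fix n v),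
    measureReal_restrict_apply (measurableSet_fix n v)]

theorem stronglyMeasurable_Ynat (hd : 0 < d) (n : ℕ) :
    StronglyMeasurable[levelFiltration G hd n] fun g => (Ynat G n g : ℝ) :=
  Measurable.stronglyMeasurable (f := (fun σ : Equiv.Perm (Level d n) =>
    (Nat.card {v // σ v = v} : ℝ)) ∘ proj G n) (measurable_from_top.comp (comap_measurable _))

theorem measure_inter_apply_eq (μ : Measure (Ginf G)) [μ.IsMulLeftInvariant] {E : Set (Ginf G)}
    {b : Ginf G} (hE : ∀ g, b * g ∈ E ↔ g ∈ E) {m : ℕ} (w u : Level d m) :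
    μ (E ∩ {g | proj G m g w = proj G m b u}) = μ (E ∩ {g | proj G m g w = u}) := by
  rw [← measure_preimage_mul μ b]
  congr 1
  ext g
  simp [hE]

theorem mul_measureReal_inter_fix_snoc (hst : ∃ a ∈ G, SphericallyTransitive a)
    (μ : Measure (Ginf G)) [μ.IsMulLeftInvariant] [IsFiniteMeasure μ] {n : ℕ} {v : Level d n}
    {E : Set (Ginf G)} (hEm : MeasurableSet E)
    (hE : ∀ b, proj G n b = 1 → ∀ g, b * g ∈ E ↔ g ∈ E)
    (hEv : ∀ g ∈ E, proj G n g v = v) (x : Fin d) :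
    d * μ.real (E ∩ {g | proj G (n + 1) g (v.snoc x) = v.snoc x}) = μ.real E := by
  have hsymm : ∀ y, μ.real (E ∩ {g | proj G (n + 1) g (v.snoc x) = v.snoc y}) =
      μ.real (E ∩ {g | proj G (n + 1) g (v.snoc x) = v.snoc x}) := by
    intro y
    obtain ⟨b, hb1, hb⟩ :=
      exists_proj_eq_one_and_apply_eq hst (w := v.snoc x) (u := v.snoc y) (by simp)
    rw [← hb, measureReal_def, measureReal_def, measure_inter_apply_eq μ (hE b hb1)]
  have hpart : E = ⋃ y, E ∩ {g | proj G (n + 1) g (v.snoc x) = v.snoc y} := by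
    ext g
    simp only [Set.mem_iUnion, Set.mem_inter_iff, Set.mem_ofPred_eq]
    refine ⟨fun hg => ?_, fun ⟨_, hg, _⟩ => hg⟩
    obtain ⟨y, hy⟩ := (proj G (n + 1) g (v.snoc x)).exists_snoc_eq
    rw [proj_succ_apply_parent, Level.parent_snoc, hEv g hg] at hy
    exact ⟨y, hg, hy.symm⟩
  conv_rhs => rw [hpart]
  rw [measureReal_iUnion_fintype, Finset.sum_congr rfl fun y _ => hsymm y, Finset.sum_const,
    Finset.card_univ, Fintype.card_fin, nsmul_eq_mul]
  · intro y y' hne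
    refine Set.disjoint_left.mpr fun g hy hy' => hne ?_
    exact v.snoc_right_injective (hy.2.symm.trans hy'.2)
  · exact fun y => hEm.inter (measurableSet_proj_preimage _ {σ | σ (v.snoc x) = v.snoc y})

theorem setIntegral_Ynat_succ (hd : 0 < d) (hst : ∃ a ∈ G, SphericallyTransitive a)
    (μ : Measure (Ginf G)) [μ.IsMulLeftInvariant] [IsFiniteMeasure μ] {n : ℕ}
    {s : Set (Ginf G)} (hs : MeasurableSet[levelFiltration G hd n] s) :
    ∫ g in s, (Ynat G n g : ℝ) ∂μ = ∫ g in s, (Ynat G (n + 1) g : ℝ) ∂μ := by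
  have hsm := (levelFiltration G hd).le n s hs
  rw [setIntegral_Ynat μ s, setIntegral_Ynat μ s, Level.sum_eq_sum_sum_snoc]
  refine Finset.sum_congr rfl fun v _ => ?_
  set E := {g | proj G n g v = v} ∩ s
  have hE : ∀ b, proj G n b = 1 → ∀ g, b * g ∈ E ↔ g ∈ E := by
    obtain ⟨S, -, rfl⟩ := hs
    intro b hb g
    simp [E, hb]
  have hfix : ∀ x, {g | proj G (n + 1) g (v.snoc x) = v.snoc x} ∩ s =
      E ∩ {g | proj G (n + 1) g (v.snoc x) = v.snoc x} := by
    intro x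
    ext g
    simp only [E, Set.mem_inter_iff, Set.mem_ofPred_eq]
    refine ⟨fun ⟨hx, hg⟩ => ⟨⟨?_, hg⟩, hx⟩,
      fun ⟨⟨_, hg⟩, hx⟩ => ⟨hx, hg⟩⟩
    simpa [proj_succ_apply_parent] using congrArg Level.parent hx
  have hchild : ∀ x,
      μ.real (E ∩ {g | proj G (n + 1) g (v.snoc x) = v.snoc x}) = μ.real E / d := by
    intro x
    rw [← mul_measureReal_inter_fix_snoc hst μ ((measurableSet_fix n v).inter hsm) hE
      (fun g hg => hg.1) x, mul_div_cancel_left₀ _ (Nat.cast_ne_zero.mpr hd.ne')]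
  simp_rw [hfix, hchild]
  rw [Finset.sum_const, Finset.card_univ, Fintype.card_fin, nsmul_eq_mul,
    mul_div_cancel₀ _ (Nat.cast_ne_zero.mpr hd.ne')]

theorem martingale_Ynat (hd : 0 < d) (hst : ∃ a ∈ G, SphericallyTransitive a)
    (μ : Measure (Ginf G)) [μ.IsMulLeftInvariant] [IsFiniteMeasure μ] :
    Martingale (fun n g => (Ynat G n g : ℝ)) (levelFiltration G hd) μ :=
  martingale_of_setIntegral_eq_succ (stronglyMeasurable_Ynat hd) (integrable_Ynat μ)
    fun _ _ hs => setIntegral_Ynat_succ hd hst μ hs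

end Ginf

end

open MeasureTheory in
/-- If `G ≤ Aut(X*)` has a spherically transitive element, then for almost every
`g ∈ G∞` (w.r.t. the normalized Haar measure) the sequence `Y_1(g), Y_2(g), …` of
fixed-point counts is eventually constant. -/
theorem fixedPointProcess_eventually_constant {d : ℕ} (hd : 2 ≤ d)
    (G : Subgroup (TreeAut d))
    (hst : ∃ g ∈ G, SphericallyTransitive g)
    (μ : Measure (Ginf G)) [μ.IsHaarMeasure] [IsProbabilityMeasure μ] :
    μ {g : Ginf G | ∃ N : ℕ, ∀ m : ℕ, N ≤ m → Ynat G m g = Ynat G N g} = 1 := by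
  have hae := (Ginf.martingale_Ynat (by omega) hst μ).ae_eventually_const_of_natCast
  exact (measure_congr (ae_eq_univ.mpr (ae_iff.mp hae))).trans measure_univ
end

section
/- Let T = (π_1, …, π_n) be a tree-like multi-set of permutations of a finite set X. If #Fix(π_i) + #Fix(π_j) ≤ 3 for some pair of indices i ≠ j, then π_k is the identity permutation for every index k ∉ {i, j}. -/
/-- The cycle graph of a multi-set (indexed family) of permutations of `X`: a bipartite
graph whose white vertices are the points of `X` and whose black vertices are the cycles
of length at least 2 of the permutations (counted with multiplicity over the index set),
a white vertex being joined to a cycle exactly when the cycle moves it. -/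
def cycleGraph {I X : Type*} [Fintype X] [DecidableEq X] (π : I → Equiv.Perm X) :
    SimpleGraph (X ⊕ {p : I × Equiv.Perm X // p.2 ∈ (π p.1).cycleFactorsFinset}) where
  Adj a b := ∃ (x : X) (c : {p : I × Equiv.Perm X // p.2 ∈ (π p.1).cycleFactorsFinset}),
    c.1.2 x ≠ x ∧ ((a = Sum.inl x ∧ b = Sum.inr c) ∨ (a = Sum.inr c ∧ b = Sum.inl x))
  symm := by
    refine ⟨?_⟩
    rintro a b ⟨x, c, hc, (⟨rfl, rfl⟩ | ⟨rfl, rfl⟩)⟩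
    · exact ⟨x, c, hc, Or.inr ⟨rfl, rfl⟩⟩
    · exact ⟨x, c, hc, Or.inl ⟨rfl, rfl⟩⟩
  loopless := by
    refine ⟨?_⟩
    rintro a ⟨x, c, hc, (⟨rfl, h⟩ | ⟨rfl, h⟩)⟩ <;> simp at h

/-- A multi-set (indexed family) of permutations of `X` is tree-like if its cycle graph
is a tree. -/
def TreeLikeFamily {I X : Type*} [Fintype X] [DecidableEq X] (π : I → Equiv.Perm X) :
    Prop :=
  (cycleGraph π).IsTree

/-- The number of fixed points of a permutation of a finite set. -/
def fixCard {X : Type*} [Fintype X] [DecidableEq X] (σ : Equiv.Perm X) : ℕ :=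
  (Finset.univ.filter fun x => σ x = x).card

/-! A tree has one vertex more than it has edges. Writing `s_l` for the number of points moved
by `π_l` and `c_l` for its number of nontrivial cycles, the cycle graph has `#X + ∑ c_l` vertices
and `∑ s_l` edges, so `∑ (s_l - c_l) = #X - 1`. Cycles have length at least 2, so each term is at
least `s_l / 2`, and at least 1 when `π_l ≠ 1`; as `s_l = #X - #Fix(π_l)`, a nontrivial `π_k` with
`k ∉ {i, j}` forces `#Fix(π_i) + #Fix(π_j) ≥ 4`. -/

open Finset

namespace Equiv.Perm

variable {X : Type*} [Fintype X] [DecidableEq X]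

theorem sum_card_support_cycleFactorsFinset (σ : Perm X) :
    ∑ c ∈ σ.cycleFactorsFinset, #c.support = #σ.support := by
  rw [← sum_cycleType, cycleType_def, Finset.sum, Function.comp_def]

theorem two_mul_card_cycleFactorsFinset_le (σ : Perm X) :
    2 * #σ.cycleFactorsFinset ≤ #σ.support := by
  have h := Multiset.card_nsmul_le_sum (fun _ => two_le_of_mem_cycleType (σ := σ))
  rwa [sum_cycleType, cycleType_def, Multiset.card_map, smul_eq_mul, mul_comm] at h

end Equiv.Perm

theorem fixCard_add_card_support {X : Type*} [Fintype X] [DecidableEq X] (σ : Equiv.Perm X) :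
    fixCard σ + #σ.support = Fintype.card X := by
  rw [fixCard, ← card_univ, ← card_filter_add_card_filter_not (s := univ) fun x => σ x = x]
  rfl

section CycleGraph

variable {I X : Type*} [Fintype X] [DecidableEq X] (π : I → Equiv.Perm X)

theorem sum_subtype_cycleFactorsFinset [Fintype I] {M : Type*} [AddCommMonoid M]
    (f : Equiv.Perm X → M) :
    ∑ c : {p : I × Equiv.Perm X // p.2 ∈ (π p.1).cycleFactorsFinset}, f c.1.2
      = ∑ i, ∑ c ∈ (π i).cycleFactorsFinset, f c := by
  rw [← Fintype.sum_equiv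
    (Equiv.subtypeProdEquivSigmaSubtype fun i c => c ∈ (π i).cycleFactorsFinset).symm _ _
    fun _ => rfl, Fintype.sum_sigma]
  exact Fintype.sum_congr _ _ fun i => Finset.sum_coe_sort _ f

theorem cycleGraph_isBipartiteWith :
    (cycleGraph π).IsBipartiteWith (Set.range Sum.inl) (Set.range Sum.inr) where
  disjoint := Set.disjoint_left.mpr <| by rintro _ ⟨x, rfl⟩ ⟨c, hc⟩; cases hc
  mem_of_adj := by
    rintro _ _ ⟨x, c, -, ⟨rfl, rfl⟩ | ⟨rfl, rfl⟩⟩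
    · exact Or.inl ⟨⟨x, rfl⟩, ⟨c, rfl⟩⟩
    · exact Or.inr ⟨⟨c, rfl⟩, ⟨x, rfl⟩⟩

theorem cycleGraph_adj_inr_inl (c : {p : I × Equiv.Perm X // p.2 ∈ (π p.1).cycleFactorsFinset})
    (x : X) : (cycleGraph π).Adj (.inr c) (.inl x) ↔ c.1.2 x ≠ x := by
  refine ⟨?_, fun h => ⟨x, c, h, .inr ⟨rfl, rfl⟩⟩⟩
  rintro ⟨y, d, h, ⟨h₁, -⟩ | ⟨h₁, h₂⟩⟩
  · cases h₁
  · cases Sum.inr.inj h₁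
    cases Sum.inl.inj h₂
    exact h

theorem not_cycleGraph_adj_inr_inr
    (c d : {p : I × Equiv.Perm X // p.2 ∈ (π p.1).cycleFactorsFinset}) :
    ¬(cycleGraph π).Adj (.inr c) (.inr d) := by
  rintro ⟨y, e, -, ⟨h, -⟩ | ⟨-, h⟩⟩ <;> cases h

theorem degree_inr_cycleGraph (c : {p : I × Equiv.Perm X // p.2 ∈ (π p.1).cycleFactorsFinset})
    [Fintype ((cycleGraph π).neighborSet (Sum.inr c))] :
    (cycleGraph π).degree (Sum.inr c) = #c.1.2.support := by
  have : (cycleGraph π).neighborFinset (Sum.inr c) = c.1.2.support.map .inl := by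
    ext (x | d) <;> simp [cycleGraph_adj_inr_inl, not_cycleGraph_adj_inr_inr]
  rw [← SimpleGraph.card_neighborFinset_eq_degree, this, Finset.card_map]

theorem card_edgeFinset_cycleGraph [Fintype I] [Fintype (cycleGraph π).edgeSet] :
    #(cycleGraph π).edgeFinset = ∑ i, #(π i).support := by
  classical
  have hdeg := SimpleGraph.isBipartiteWith_sum_degrees_eq_card_edges' (s := univ.map .inl)
    (t := univ.map .inr) (by simpa using cycleGraph_isBipartiteWith π)
  calc #(cycleGraph π).edgeFinset
      = ∑ c, (cycleGraph π).degree (.inr c) := by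
        convert hdeg.symm using 1
        · congr!
        · rw [sum_map]; rfl
    _ = ∑ c : {p : I × Equiv.Perm X // p.2 ∈ (π p.1).cycleFactorsFinset}, #c.1.2.support :=
      Fintype.sum_congr _ _ fun c => degree_inr_cycleGraph π c
    _ = ∑ i, #(π i).support := by
      simp only [sum_subtype_cycleFactorsFinset π fun c => #c.support,
        Equiv.Perm.sum_card_support_cycleFactorsFinset]

end CycleGraph

namespace TreeLikeFamily

variable {I X : Type*} [Fintype I] [Fintype X] [DecidableEq X] {π : I → Equiv.Perm X}

theorem sum_card_support_add_one (hT : TreeLikeFamily π) :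
    ∑ i, #(π i).support + 1 = Fintype.card X + ∑ i, #(π i).cycleFactorsFinset := by
  classical
  have h := hT.card_edgeFinset
  rw [card_edgeFinset_cycleGraph, Fintype.card_sum, Fintype.card_eq_sum_ones (α := Subtype _),
    sum_subtype_cycleFactorsFinset π fun _ => 1] at h
  simpa only [← card_eq_sum_ones] using h

theorem four_le_fixCard_add_fixCard (hT : TreeLikeFamily π) {i j k : I} (hij : i ≠ j)
    (hik : i ≠ k) (hjk : j ≠ k) (hk : π k ≠ 1) : 4 ≤ fixCard (π i) + fixCard (π j) := by
  classical
  have hcf := fun l => (π l).two_mul_card_cycleFactorsFinset_le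
  have hle : ∀ l, #(π l).cycleFactorsFinset ≤ #(π l).support := fun l => by grind
  set e : I → ℕ := fun l => #(π l).support - #(π l).cycleFactorsFinset
  have hsum : ∑ l, e l + 1 = Fintype.card X := by
    have := hT.sum_card_support_add_one
    have := sum_le_sum fun l (_ : l ∈ univ) => hle l
    rw [sum_tsub_distrib _ fun l _ => hle l]
    omega
  have hijk : e i + e j + e k ≤ ∑ l, e l :=
    calc e i + e j + e k = ∑ l ∈ {i, j, k}, e l := by
          rw [sum_insert (by simp [hij, hik]), sum_pair hjk, add_assoc]
      _ ≤ ∑ l, e l := sum_le_univ_sum_of_nonneg fun _ => Nat.zero_le _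
  have hk_pos : 0 < #(π k).cycleFactorsFinset :=
    card_pos.mpr (nonempty_iff_ne_empty.mpr (mt Equiv.Perm.cycleFactorsFinset_eq_empty_iff.mp hk))
  have := fixCard_add_card_support (π i)
  have := fixCard_add_card_support (π j)
  have := hcf i
  have := hcf j
  have := hcf k
  simp only [e] at hsum hijk
  omega

end TreeLikeFamily

/-- For a tree-like multi-set `(π_1, …, π_n)` of permutations of a finite set `X`: if
`#Fix(π_i) + #Fix(π_j) ≤ 3` for some pair of distinct indices `i ≠ j`, then `π_k` is the
identity for every index `k ∉ {i, j}`. -/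
theorem treeLike_three_fixed_points {n : ℕ} {X : Type*} [Fintype X] [DecidableEq X]
    (π : Fin n → Equiv.Perm X) (hT : TreeLikeFamily π)
    {i j : Fin n} (hij : i ≠ j)
    (hfix : fixCard (π i) + fixCard (π j) ≤ 3) :
    ∀ k : Fin n, k ≠ i → k ≠ j → π k = 1 := by
  intro k hki hkj
  by_contra hk
  have := hT.four_le_fixCard_add_fixCard hij hki.symm hkj.symm hk
  omega
end
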